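/- Let g : [−b,b] → ℝ have bounded variation on [−b,b] with V(g;[−b,b]) = M, let ε > 0, and let k be a positive integer with k > M/(2ε). Then there do not exist sets U₁, …, U_k ⊆ [−b,b], each a finite union of closed intervals, such that the collection of all these constituent closed intervals has pairwise disjoint open interiors and g(U_j) ⊇ [−ε,ε] for every j = 1, …, k. -/

import Mathlib

open Set MeasureTheory
open scoped ENNReal

/-!
Each set `g '' Uⱼ` contains `[-ε, ε]`, so the images of the constituent intervals of `Uⱼ` have
total length at least `2ε`; the image of an interval has length at most its diameter, which is
at most the variation of `g` on that interval. The `k` families together consist of intervals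
with disjoint interiors in `[-b, b]`, so their variations add up to at most `M`. Hence
`2kε ≤ M`, contradicting `k > M / (2ε)`.
-/

theorem volume_image_le_eVariationOn {α : Type*} [LinearOrder α] (f : α → ℝ) (s : Set α) :
    volume (f '' s) ≤ eVariationOn f s := by
  refine (Real.volume_le_diam _).trans (Metric.ediam_le ?_)
  rintro _ ⟨x, hx, rfl⟩ _ ⟨y, hy, rfl⟩
  exact eVariationOn.edist_le f hx hy

theorem volume_image_biUnion_Icc_le_sum_eVariationOn (f : ℝ → ℝ) (T : Finset (ℝ × ℝ)) :
    volume (f '' ⋃ p ∈ (T : Set (ℝ × ℝ)), Icc p.1 p.2)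
      ≤ ∑ p ∈ T, eVariationOn f (Icc p.1 p.2) := by
  rw [image_iUnion₂]
  exact (measure_biUnion_finset_le _ _).trans
    (Finset.sum_le_sum fun p _ => volume_image_le_eVariationOn f _)

section IntervalFamily

variable {ι : Type*} (f : ℝ → ℝ) (A B : ι → ℝ) (c : ℝ)

theorem sum_eVariationOn_Icc_le_of_lt (s : Finset ι) (hlt : ∀ i ∈ s, A i < B i)
    (hdisj : (s : Set ι).PairwiseDisjoint fun i => Ioo (A i) (B i)) (d : ℝ)
    (hsub : ∀ i ∈ s, Icc (A i) (B i) ⊆ Icc c d) :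
    ∑ i ∈ s, eVariationOn f (Icc (A i) (B i)) ≤ eVariationOn f (Icc c d) := by
  classical
  induction s using Finset.induction_on_max_value A generalizing d with
  | empty => simp
  | insert i s hi hmax ih =>
    have hs : s ⊆ insert i s := Finset.subset_insert i s
    have hAB := hlt i (s.mem_insert_self i)
    obtain ⟨hci, hid⟩ := (Icc_subset_Icc_iff hAB.le).1 (hsub i (s.mem_insert_self i))
    -- disjoint interiors and `A j ≤ A i` force `B j ≤ A i`
    have hleft : ∀ j ∈ s, Icc (A j) (B j) ⊆ Icc c (A i) := by
      intro j hj
      have hij : i ≠ j := fun h => hi (h ▸ hj)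
      have hBj := Ioo_disjoint_Ioo.1 (hdisj (s.mem_insert_self i) (Finset.mem_insert_of_mem hj) hij)
      rw [max_eq_left (hmax j hj)] at hBj
      have hjc := ((Icc_subset_Icc_iff (hlt j (hs hj)).le).1 (hsub j (hs hj))).1
      exact Icc_subset_Icc hjc (by simpa [hAB.not_ge] using hBj)
    calc ∑ j ∈ insert i s, eVariationOn f (Icc (A j) (B j))
        = eVariationOn f (Icc (A i) (B i)) + ∑ j ∈ s, eVariationOn f (Icc (A j) (B j)) :=
          Finset.sum_insert hi
      _ ≤ eVariationOn f (Icc (A i) (B i)) + eVariationOn f (Icc c (A i)) :=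
          add_le_add_right (ih (fun j hj => hlt j (hs hj)) (hdisj.subset hs) _ hleft) _
      _ = eVariationOn f (Icc c (B i)) := by
          rw [add_comm]
          simpa using eVariationOn.Icc_add_Icc f (s := univ) hci hAB.le (mem_univ _)
      _ ≤ eVariationOn f (Icc c d) := eVariationOn.mono f (Icc_subset_Icc_right hid)

theorem sum_eVariationOn_Icc_le (s : Finset ι)
    (hdisj : (s : Set ι).PairwiseDisjoint fun i => Ioo (A i) (B i)) (d : ℝ)
    (hsub : ∀ i ∈ s, Icc (A i) (B i) ⊆ Icc c d) :
    ∑ i ∈ s, eVariationOn f (Icc (A i) (B i)) ≤ eVariationOn f (Icc c d) := by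
  classical
  have hdeg : ∀ i ∈ s, eVariationOn f (Icc (A i) (B i)) ≠ 0 → A i < B i := by
    intro i _ hne
    by_contra hge
    exact hne (eVariationOn.subsingleton f (subsingleton_Icc_of_ge (not_lt.1 hge)))
  rw [← Finset.sum_filter_of_ne hdeg]
  exact sum_eVariationOn_Icc_le_of_lt f A B c _ (fun i hi => (Finset.mem_filter.1 hi).2)
    (hdisj.subset (Finset.coe_subset.2 (Finset.filter_subset _ _))) d (fun i hi => hsub i (Finset.mem_filter.1 hi).1)

end IntervalFamily

theorem stmt_10_general (b : ℝ) (g : ℝ → ℝ) (M : ℝ)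
    (hbv : BoundedVariationOn g (Icc (-b) b))
    (hM : (eVariationOn g (Icc (-b) b)).toReal = M)
    (ε : ℝ) (hε : 0 < ε) (k : ℕ) (hkM : M / (2 * ε) < (k : ℝ)) :
    ¬ ∃ (U : Fin k → Set ℝ) (T : Fin k → Finset (ℝ × ℝ)),
        (∀ j, U j = ⋃ p ∈ (T j : Set (ℝ × ℝ)), Icc p.1 p.2) ∧
        (∀ j, U j ⊆ Icc (-b) b) ∧
        (∀ j j', ∀ p ∈ T j, ∀ p' ∈ T j', (j, p) ≠ (j', p') →
          Ioo p.1 p.2 ∩ Ioo p'.1 p'.2 = ∅) ∧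
        (∀ j, Icc (-ε) ε ⊆ g '' U j) := by
  rintro ⟨U, T, hU, hUb, hdisj, himg⟩
  have hpiece : ∀ j, ENNReal.ofReal (2 * ε) ≤ ∑ p ∈ T j, eVariationOn g (Icc p.1 p.2) := by
    intro j
    calc ENNReal.ofReal (2 * ε) = volume (Icc (-ε) ε) := by rw [Real.volume_Icc]; ring_nf
      _ ≤ volume (g '' U j) := measure_mono (himg j)
      _ ≤ _ := hU j ▸ volume_image_biUnion_Icc_le_sum_eVariationOn g (T j)
  have htotal : ∑ j, ∑ p ∈ T j, eVariationOn g (Icc p.1 p.2) ≤ eVariationOn g (Icc (-b) b) := by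
    rw [Finset.sum_sigma']
    refine sum_eVariationOn_Icc_le g (fun x : (_ : Fin k) × (ℝ × ℝ) => x.2.1) (fun x => x.2.2) (-b) _ ?_ b ?_
    · rintro ⟨j, p⟩ hp ⟨j', p'⟩ hp' hne
      refine disjoint_iff_inter_eq_empty.2
        (hdisj j j' p (Finset.mem_sigma.1 hp).2 p' (Finset.mem_sigma.1 hp').2 ?_)
      rintro ⟨⟩
      exact hne rfl
    · rintro ⟨j, p⟩ hp
      exact (subset_biUnion_of_mem (u := fun p : ℝ × ℝ => Icc p.1 p.2)
        (Finset.mem_sigma.1 hp).2).trans ((hU j).symm ▸ hUb j)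
  have hkε : (k : ℝ≥0∞) * ENNReal.ofReal (2 * ε) ≤ eVariationOn g (Icc (-b) b) := by
    simpa using (Finset.sum_le_sum fun j _ => hpiece j).trans htotal
  have := ENNReal.toReal_mono hbv hkε
  rw [hM, ENNReal.toReal_mul, ENNReal.toReal_natCast, ENNReal.toReal_ofReal (by positivity)] at this
  rw [div_lt_iff₀ (by positivity)] at hkM
  linarith

/-- The counting argument concluding the proof of Proposition A.1: if g has
bounded variation M on [-b,b] and k > M/(2ε), there are no k sets U₁,…,U_k in
[-b,b], each a finite union of closed intervals with all constituent intervals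
having pairwise disjoint open interiors, such that g(U_j) ⊇ [-ε,ε] for all j. -/
theorem stmt_10 (b : ℝ) (g : ℝ → ℝ) (M : ℝ)
    (hbv : BoundedVariationOn g (Icc (-b) b))
    (hM : (eVariationOn g (Icc (-b) b)).toReal = M)
    (ε : ℝ) (hε : 0 < ε) (k : ℕ) (hk : 0 < k) (hkM : M / (2 * ε) < (k : ℝ)) :
    ¬ ∃ (U : Fin k → Set ℝ) (T : Fin k → Finset (ℝ × ℝ)),
        (∀ j, U j = ⋃ p ∈ (T j : Set (ℝ × ℝ)), Icc p.1 p.2) ∧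
        (∀ j, U j ⊆ Icc (-b) b) ∧
        (∀ j j', ∀ p ∈ T j, ∀ p' ∈ T j', (j, p) ≠ (j', p') →
          Ioo p.1 p.2 ∩ Ioo p'.1 p'.2 = ∅) ∧
        (∀ j, Icc (-ε) ε ⊆ g '' U j) :=
  stmt_10_general b g M hbv hM ε hε k hkM
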